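/- The map e ↦ (n_s(e), n_c(e)) from strings over {f, g, h, ħ} to pairs of positive integers is injective, where n_s and n_c are defined by n_s(∅) = n_c(∅) = 4 and the recursions n_s(f·e) = n_s(e)+2n_c(e), n_c(f·e) = n_c(e); n_s(g·e) = n_s(e), n_c(g·e) = 2n_s(e)+n_c(e); n_s(h·e) = 3n_s(e)+2n_c(e), n_c(h·e) = 2n_s(e)+n_c(e); n_s(ħ·e) = n_s(e)+2n_c(e), n_c(ħ·e) = 2n_s(e)+3n_c(e). -/
import Mathlib


/-- The four-character alphabet `{f, g, h, ħ}`. -/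
inductive Ch
  | f | g | h | hb
deriving DecidableEq

/-- The pair `(n_s(e), n_c(e))` counting occurrences of `+ₛ` and `+꜀` in the
signature of the fundamental direction cycle of descent `e`. -/
def nsc : List Ch → ℕ × ℕ
  | [] => (4, 4)
  | c :: e =>
    let a := (nsc e).1
    let b := (nsc e).2
    match c with
    | .f => (a + 2 * b, b)
    | .g => (a, 2 * a + b)
    | .h => (3 * a + 2 * b, 2 * a + b)
    | .hb => (a + 2 * b, 2 * a + 3 * b)

lemma nsc_pos : ∀ e, 0 < (nsc e).1 ∧ 0 < (nsc e).2
  | [] => by simp [nsc]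
  | c :: e => by
    have := nsc_pos e
    cases c <;> simp [nsc] <;> omega

theorem nsc_injective : Function.Injective nsc := by
  intro e₁
  induction e₁ with
  | nil =>
    intro e₂ h
    cases e₂ with
    | nil => rfl
    | cons c e =>
      have hp := nsc_pos e
      exfalso
      cases c <;> simp [nsc, Prod.ext_iff] at h <;> omega
  | cons c e ih =>
    intro e₂ h
    cases e₂ with
    | nil =>
      have hp := nsc_pos e
      exfalso
      cases c <;> simp [nsc, Prod.ext_iff] at h <;> omega
    | cons c' e' =>
      have hp := nsc_pos e
      have hp' := nsc_pos e'
      cases c <;> cases c' <;> simp [nsc, Prod.ext_iff] at h <;>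
        first
          | (exfalso; omega)
          | (have h2 : nsc e = nsc e' := Prod.ext (by omega) (by omega)
             rw [ih h2])
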